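/- arXiv:2408.06091 — 7 statements merged into one kernel-verified Lean document; each statement's English description precedes it below -/
import Mathlib

section
/- Let n ≥ 2 and let 0 = d_0 < d_1 < ... < d_{⌊n/2⌋} be real numbers satisfying the circular triangle inequality d_{|i|_n} + d_{|j|_n} ≥ d_{|i+j|_n} for all integers i, j. Then for any m with 2 ≤ m < n, the function d(i,j) = d_{|j-i|_m} on {0,...,m-1} is a metric, i.e., every triangle satisfies the triangle inequality: d_{|j-i|_m} + d_{|k-j|_m} ≥ d_{|k-i|_m} for distinct i, j, k. -/
/-- `|i|_n = min over integers l of |i - l·n|`. -/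
noncomputable def circAbs (n : ℕ) (i : ℤ) : ℤ :=
  sInf {m : ℤ | ∃ l : ℤ, m = |i - l * (n : ℤ)|}

lemma circAbs_le (n : ℕ) (i l : ℤ) : circAbs n i ≤ |i - l * (n : ℤ)| := by
  apply csInf_le
  · exact ⟨0, by rintro x ⟨l, rfl⟩; exact abs_nonneg _⟩
  · exact ⟨l, rfl⟩

lemma le_circAbs (n : ℕ) (i c : ℤ) (h : ∀ l : ℤ, c ≤ |i - l * (n : ℤ)|) :
    c ≤ circAbs n i := by
  refine le_csInf ⟨|i - 0 * (n : ℤ)|, 0, rfl⟩ ?_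
  rintro x ⟨l, rfl⟩; exact h l

lemma circAbs_nonneg (n : ℕ) (i : ℤ) : 0 ≤ circAbs n i :=
  le_circAbs _ _ _ fun _ => abs_nonneg _

lemma circAbs_add_mul (n : ℕ) (i t : ℤ) : circAbs n (i + t * n) = circAbs n i := by
  apply le_antisymm
  · apply le_circAbs
    intro l
    have h := circAbs_le n (i + t * n) (l + t)
    calc circAbs n (i + t * n) ≤ |i + t * n - (l + t) * n| := h
      _ = |i - l * n| := by ring_nf
  · apply le_circAbs
    intro l
    have h := circAbs_le n i (l - t)
    calc circAbs n i ≤ |i - (l - t) * n| := h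
      _ = |i + t * n - l * n| := by ring_nf

lemma circAbs_congr (n : ℕ) (x y : ℤ) (h : (n : ℤ) ∣ (x - y)) :
    circAbs n x = circAbs n y := by
  obtain ⟨t, ht⟩ := h
  have hx : x = y + t * n := by linarith [ht]
  rw [hx, circAbs_add_mul]

lemma circAbs_eq_abs (n : ℕ) (i : ℤ) (h : 2 * |i| ≤ n) : circAbs n i = |i| := by
  apply le_antisymm
  · have := circAbs_le n i 0
    simpa using this
  · apply le_circAbs
    intro l
    rcases eq_or_ne l 0 with rfl | hl
    · simp
    · have h1 : (n : ℤ) ≤ |l * n| := by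
        rw [abs_mul]
        have : (1 : ℤ) ≤ |l| := Int.one_le_abs (by omega)
        have hn0 : (0:ℤ) ≤ |(n:ℤ)| := abs_nonneg _
        calc (n : ℤ) = 1 * |(n:ℤ)| := by simp
          _ ≤ |l| * |(n:ℤ)| := by apply mul_le_mul_of_nonneg_right this hn0
      have h2 : |l * n| - |i| ≤ |i - l * n| := by
        have := abs_sub_abs_le_abs_sub (l * n) i
        have heq : |l * n - i| = |i - l * n| := abs_sub_comm _ _
        linarith
      linarith

lemma circAbs_min (n : ℕ) (x : ℤ) (h0 : 0 ≤ x) (h1 : x ≤ n) :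
    circAbs n x = min x ((n : ℤ) - x) := by
  apply le_antisymm
  · apply le_min
    · have := circAbs_le n x 0
      rw [abs_of_nonneg (by linarith : (0:ℤ) ≤ x - 0 * n)] at this
      linarith
    · have := circAbs_le n x 1
      rw [abs_of_nonpos (by linarith : x - 1 * (n:ℤ) ≤ 0)] at this
      linarith
  · apply le_circAbs
    intro l
    rcases le_or_gt l 0 with hl | hl
    · apply le_abs.mpr (Or.inl _)
      have : l * n ≤ 0 := mul_nonpos_of_nonpos_of_nonneg hl (by positivity)
      have := min_le_left x ((n:ℤ) - x)
      linarith
    · apply le_abs.mpr (Or.inr _)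
      have hl1 : (1:ℤ) ≤ l := hl
      have : (n:ℤ) ≤ l * n := by nlinarith [Int.ofNat_nonneg n]
      have := min_le_right x ((n:ℤ) - x)
      linarith

/-- A representative of minimal absolute value. -/
lemma circAbs_exists_rep (m : ℕ) (hm : 1 ≤ m) (a : ℤ) :
    ∃ α : ℤ, (m : ℤ) ∣ (a - α) ∧ 2 * |α| ≤ m ∧ circAbs m a = |α| := by
  set r := a % (m : ℤ) with hr
  have hm0 : (0:ℤ) < m := by exact_mod_cast hm
  have h0 : 0 ≤ r := Int.emod_nonneg a (by omega)
  have h1 : r < m := Int.emod_lt_of_pos a hm0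
  have hdvd : (m : ℤ) ∣ (a - r) := by
    refine ⟨a / m, ?_⟩
    have := Int.emod_add_mul_ediv a (m : ℤ)
    linarith
  have key : circAbs m a = min r ((m : ℤ) - r) := by
    rw [circAbs_congr m a r hdvd, circAbs_min m r h0 (by omega)]
  by_cases h : 2 * r ≤ m
  · exact ⟨r, hdvd, by rw [abs_of_nonneg h0]; omega,
      by rw [key, abs_of_nonneg h0, min_eq_left (by omega)]⟩
  · refine ⟨r - m, ?_, ?_, ?_⟩
    · have : a - (r - m) = (a - r) + 1 * m := by ring
      rw [this]
      exact dvd_add hdvd ⟨1, by ring⟩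
    · rw [abs_of_nonpos (by omega)]; omega
    · rw [key, abs_of_nonpos (by omega), min_eq_right (by omega)]; ring

/-- If `0 = d_0 < d_1 < ... < d_{⌊n/2⌋}` satisfy the circular triangle inequality
`d_{|i|_n} + d_{|j|_n} ≥ d_{|i+j|_n}`, then for any `2 ≤ m < n` the function
`d(i,j) = d_{|j-i|_m}` on `{0,...,m-1}` satisfies the triangle inequality on
every triple of distinct points. -/
theorem circular_restrict_metric (n : ℕ) (hn : 2 ≤ n) (d : ℕ → ℝ)
    (hd0 : d 0 = 0)
    (hmono : ∀ a b : ℕ, a < b → b ≤ n / 2 → d a < d b)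
    (hcirc : ∀ i j : ℤ,
      d (circAbs n i).toNat + d (circAbs n j).toNat ≥ d (circAbs n (i + j)).toNat)
    (m : ℕ) (hm2 : 2 ≤ m) (hmn : m < n) :
    ∀ i j k : Fin m, i ≠ j → j ≠ k → k ≠ i →
      d (circAbs m ((j : ℤ) - (i : ℤ))).toNat + d (circAbs m ((k : ℤ) - (j : ℤ))).toNat
        ≥ d (circAbs m ((k : ℤ) - (i : ℤ))).toNat := by
  have hmono' : ∀ p q : ℕ, p ≤ q → q ≤ n / 2 → d p ≤ d q := by
    intro p q hpq hq
    rcases lt_or_eq_of_le hpq with h | h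
    · exact (hmono p q h hq).le
    · rw [h]
  intro i j k _ _ _
  set a : ℤ := (j : ℤ) - (i : ℤ) with ha
  set b : ℤ := (k : ℤ) - (j : ℤ) with hb
  have hab : (k : ℤ) - (i : ℤ) = a + b := by ring
  rw [hab]
  obtain ⟨α, hα1, hα2, hα3⟩ := circAbs_exists_rep m (by omega) a
  obtain ⟨β, hβ1, hβ2, hβ3⟩ := circAbs_exists_rep m (by omega) b
  set s : ℤ := α + β with hs
  have hab0 : 0 ≤ |α| := abs_nonneg α
  have hbb0 : 0 ≤ |β| := abs_nonneg β
  have habs : |s| ≤ m := by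
    calc |s| ≤ |α| + |β| := abs_add_le _ _
      _ ≤ m := by linarith
  -- circAbs n α = |α|, circAbs n β = |β|
  have hmn' : (m:ℤ) < n := by exact_mod_cast hmn
  have hnα : circAbs n α = |α| := circAbs_eq_abs n α (by linarith)
  have hnβ : circAbs n β = |β| := circAbs_eq_abs n β (by linarith)
  -- lower bound on circAbs n s
  have hlow : min |s| ((n : ℤ) - |s|) ≤ circAbs n s := by
    apply le_circAbs
    intro l
    rcases lt_trichotomy l 0 with hl | rfl | hl
    · apply le_abs.mpr (Or.inl _)
      have hl1 : l ≤ -1 := by omega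
      have h1 : l * n ≤ -n := by nlinarith [Int.ofNat_nonneg n]
      have h2 : -|s| ≤ s := neg_abs_le s
      have := min_le_right |s| ((n:ℤ) - |s|)
      linarith
    · simp [le_abs_self]
    · apply le_abs.mpr (Or.inr _)
      have hl1 : (1:ℤ) ≤ l := hl
      have h1 : (n:ℤ) ≤ l * n := by nlinarith [Int.ofNat_nonneg n]
      have h2 : s ≤ |s| := le_abs_self s
      have := min_le_right |s| ((n:ℤ) - |s|)
      linarith
  -- upper bounds on circAbs n s
  have hup1 : circAbs n s ≤ |s| := by simpa using circAbs_le n s 0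
  have hup2 : circAbs n s ≤ (n : ℤ) - |s| := by
    rcases le_or_gt 0 s with h | h
    · rw [abs_of_nonneg h] at habs ⊢
      have := circAbs_le n s 1
      rw [abs_of_nonpos (by linarith : s - 1 * (n:ℤ) ≤ 0)] at this
      linarith
    · rw [abs_of_neg h] at habs ⊢
      have := circAbs_le n s (-1)
      rw [abs_of_nonneg (by linarith : (0:ℤ) ≤ s - (-1) * (n:ℤ))] at this
      linarith
  have hhalf : 2 * circAbs n s ≤ n := by linarith
  -- circAbs m (a+b) ≤ circAbs n s
  have hcab : circAbs m (a + b) = circAbs m s := by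
    apply circAbs_congr
    have : a + b - s = (a - α) + (b - β) := by ring
    rw [this]; exact dvd_add hα1 hβ1
  have hmle : circAbs m (a + b) ≤ circAbs n s := by
    rw [hcab]
    have u1 : circAbs m s ≤ |s| := by simpa using circAbs_le m s 0
    have u2 : circAbs m s ≤ (m : ℤ) - |s| := by
      rcases le_or_gt 0 s with h | h
      · rw [abs_of_nonneg h] at habs ⊢
        have := circAbs_le m s 1
        rw [abs_of_nonpos (by linarith : s - 1 * (m:ℤ) ≤ 0)] at this
        linarith
      · rw [abs_of_neg h] at habs ⊢
        have := circAbs_le m s (-1)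
        rw [abs_of_nonneg (by linarith : (0:ℤ) ≤ s - (-1) * (m:ℤ))] at this
        linarith
    have : circAbs m s ≤ min |s| ((n:ℤ) - |s|) := le_min u1 (by linarith)
    linarith
  -- assemble
  have h1 : d (circAbs m (a + b)).toNat ≤ d (circAbs n s).toNat := by
    apply hmono'
    · exact Int.toNat_le_toNat hmle
    · have h0 := circAbs_nonneg n s
      omega
  have h2 := hcirc α β
  rw [hnα, hnβ, ← hα3, ← hβ3] at h2
  calc d (circAbs m (a + b)).toNat ≤ d (circAbs n s).toNat := h1
    _ ≤ d (circAbs m a).toNat + d (circAbs m b).toNat := h2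
    _ = _ := rfl
end

section
/- Two finite metric spaces X = {P_1,...,P_n} and Y = {Q_1,...,Q_n} with the same number n of points have the same discrete Riesz energy function B(z) = ∑_{i≠j} d(·,·)^z (for all real z, or equivalently for all positive integers z up to n(n-1)/2 together with z = 0) if and only if they have the same multiset of edge lengths [d(P_i,P_j)]_{i<j} = [d(Q_k,Q_l)]_{k<l}. -/
open scoped BigOperators

open Filter Topology

private lemma tend_aux (a : ℝ) (ha : 0 < a) (s : Multiset ℝ)
    (hs : ∀ x ∈ s, 0 < x ∧ x ≤ a) :
    Tendsto (fun z : ℝ => (s.map fun m => (m / a) ^ z).sum) atTop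
      (𝓝 (s.count a)) := by
  induction s using Multiset.induction_on with
  | empty => simp
  | cons m s ih =>
    have hm := hs m (Multiset.mem_cons_self m s)
    have ih' := ih (fun x hx => hs x (Multiset.mem_cons_of_mem hx))
    simp only [Multiset.map_cons, Multiset.sum_cons, Multiset.count_cons]
    by_cases hma : m = a
    · subst hma
      simp only [div_self (ne_of_gt ha), Real.one_rpow, if_pos rfl]
      have := (tendsto_const_nhds (x := (1:ℝ)) (f := atTop)).add ih'
      convert this using 2
      push_cast
      ring
    · have hlt : m / a < 1 := (div_lt_one ha).2 (lt_of_le_of_ne hm.2 hma)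
      have h0 : Tendsto (fun z : ℝ => (m / a) ^ z) atTop (𝓝 0) :=
        tendsto_rpow_atTop_of_base_lt_one _ (by linarith [div_pos hm.1 ha]) hlt
      simp only [if_neg (Ne.symm hma)]
      simpa using h0.add ih'

private lemma card_eq_of_sums (s t : Multiset ℝ)
    (h : ∀ z : ℝ, (s.map (fun m => m ^ z)).sum = (t.map (fun m => m ^ z)).sum) :
    Multiset.card s = Multiset.card t := by
  have h0 := h 0
  simp only [Real.rpow_zero] at h0
  have hs : (s.map (fun _ => (1:ℝ))).sum = (Multiset.card s : ℝ) := by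
    simp [Multiset.map_const', mul_comm]
  have ht : (t.map (fun _ => (1:ℝ))).sum = (Multiset.card t : ℝ) := by
    simp [Multiset.map_const', mul_comm]
  exact_mod_cast hs ▸ ht ▸ h0

private lemma key_aux : ∀ (n : ℕ) (s t : Multiset ℝ), Multiset.card s = n →
    (∀ x ∈ s, 0 < x) → (∀ x ∈ t, 0 < x) →
    (∀ z : ℝ, (s.map (fun m => m ^ z)).sum = (t.map (fun m => m ^ z)).sum) →
    s = t := by
  intro n
  induction n with
  | zero =>
    intro s t hcard _ _ h
    have hct := card_eq_of_sums s t h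
    rw [hcard] at hct
    rw [Multiset.card_eq_zero.1 hcard, Multiset.card_eq_zero.1 hct.symm]
  | succ n ih =>
    intro s t hcard hs ht h
    have hct : Multiset.card t = n + 1 := (card_eq_of_sums s t h) ▸ hcard
    -- pick the max element a of s + t
    have hne : (s + t).toFinset.Nonempty := by
      rw [Multiset.toFinset_nonempty]
      intro h0
      have := congrArg Multiset.card h0
      simp [hcard] at this
    set a := (s + t).toFinset.max' hne with ha_def
    have ha_mem : a ∈ s + t := Multiset.mem_toFinset.1 ((s + t).toFinset.max'_mem hne)
    have ha_max : ∀ x ∈ s + t, x ≤ a := fun x hx =>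
      (s + t).toFinset.le_max' x (Multiset.mem_toFinset.2 hx)
    have ha_pos : 0 < a := by
      rcases Multiset.mem_add.1 ha_mem with h' | h'
      exacts [hs a h', ht a h']
    -- counts of a agree
    have hcount : s.count a = t.count a := by
      have hts : Tendsto (fun z : ℝ => (s.map fun m => (m / a) ^ z).sum) atTop
          (𝓝 (s.count a)) :=
        tend_aux a ha_pos s (fun x hx => ⟨hs x hx, ha_max x (Multiset.mem_add.2 (Or.inl hx))⟩)
      have htt : Tendsto (fun z : ℝ => (t.map fun m => (m / a) ^ z).sum) atTop
          (𝓝 (t.count a)) :=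
        tend_aux a ha_pos t (fun x hx => ⟨ht x hx, ha_max x (Multiset.mem_add.2 (Or.inr hx))⟩)
      have heq : (fun z : ℝ => (s.map fun m => (m / a) ^ z).sum)
          = (fun z : ℝ => (t.map fun m => (m / a) ^ z).sum) := by
        funext z
        have hdiv : ∀ (u : Multiset ℝ), (∀ x ∈ u, 0 < x) →
            (u.map fun m => (m / a) ^ z).sum = (u.map fun m => m ^ z).sum / a ^ z := by
          intro u hu
          rw [div_eq_mul_inv, ← Multiset.sum_map_mul_right]
          refine congrArg Multiset.sum (Multiset.map_congr rfl fun x hx => ?_)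
          rw [Real.div_rpow (le_of_lt (hu x hx)) (le_of_lt ha_pos), div_eq_mul_inv]
        rw [hdiv s hs, hdiv t ht, h z]
      rw [heq] at hts
      exact_mod_cast tendsto_nhds_unique hts htt
    have has : a ∈ s := by
      rcases Multiset.mem_add.1 ha_mem with h' | h'
      · exact h'
      · rw [← Multiset.count_pos, hcount, Multiset.count_pos]; exact h'
    have hat : a ∈ t := by rw [← Multiset.count_pos, ← hcount, Multiset.count_pos]; exact has
    -- erase a from both
    have hse := (Multiset.cons_erase has).symm
    have hte := (Multiset.cons_erase hat).symm
    have h' : ∀ z : ℝ, ((s.erase a).map (fun m => m ^ z)).sum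
        = ((t.erase a).map (fun m => m ^ z)).sum := by
      intro z
      have := h z
      rw [hse, hte] at this
      simp only [Multiset.map_cons, Multiset.sum_cons] at this
      linarith
    have hres := ih (s.erase a) (t.erase a)
      (by rw [Multiset.card_erase_of_mem has, hcard]; rfl)
      (fun x hx => hs x (Multiset.mem_of_mem_erase hx))
      (fun x hx => ht x (Multiset.mem_of_mem_erase hx)) h'
    rw [hse, hte, hres]

private lemma offDiag_sum_eq (n : ℕ) (g : Fin n × Fin n → ℝ)
    (hg : ∀ p, g p.swap = g p) :
    (∑ p ∈ Finset.univ.offDiag, g p)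
      = 2 * ∑ p ∈ Finset.univ.filter (fun p : Fin n × Fin n => p.1 < p.2), g p := by
  rw [← Finset.sum_filter_add_sum_filter_not Finset.univ.offDiag
    (fun p : Fin n × Fin n => p.1 < p.2)]
  have h1 : Finset.univ.offDiag.filter (fun p : Fin n × Fin n => p.1 < p.2)
      = Finset.univ.filter (fun p : Fin n × Fin n => p.1 < p.2) := by
    ext p
    simp only [Finset.mem_filter, Finset.mem_offDiag, Finset.mem_univ, true_and]
    exact ⟨fun h => h.2, fun h => ⟨ne_of_lt h, h⟩⟩
  have h2 : (∑ p ∈ Finset.univ.offDiag.filter (fun p : Fin n × Fin n => ¬ p.1 < p.2), g p)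
      = ∑ p ∈ Finset.univ.filter (fun p : Fin n × Fin n => p.1 < p.2), g p := by
    refine Finset.sum_nbij' (fun p => p.swap) (fun p => p.swap) ?_ ?_ ?_ ?_ ?_
    · intro p hp
      simp only [Finset.mem_filter, Finset.mem_offDiag, Finset.mem_univ, true_and] at hp ⊢
      exact lt_of_le_of_ne (not_lt.1 hp.2) (Ne.symm hp.1)
    · intro p hp
      simp only [Finset.mem_filter, Finset.mem_offDiag, Finset.mem_univ, true_and] at hp ⊢
      exact ⟨(ne_of_lt hp).symm, not_lt.2 (le_of_lt hp)⟩
    · intro p _; rfl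
    · intro p _; rfl
    · intro p _; exact (hg p).symm
  rw [h1, h2]; ring

/-- Two finite metric spaces with `n` points have the same discrete Riesz energy
function `B(z) = ∑_{i≠j} d(·,·)^z` (for all real `z`) if and only if they have the
same multiset of edge lengths `[d(P_i,P_j)]_{i<j}`. -/
theorem riesz_energy_eq_iff_edge_multiset_eq {X Y : Type*} [MetricSpace X] [MetricSpace Y]
    (n : ℕ) (P : Fin n → X) (Q : Fin n → Y)
    (hP : Function.Injective P) (hQ : Function.Injective Q) :
    (∀ z : ℝ,
        (∑ p ∈ Finset.univ.offDiag, dist (P p.1) (P p.2) ^ z)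
          = ∑ p ∈ Finset.univ.offDiag, dist (Q p.1) (Q p.2) ^ z) ↔
      ((Finset.univ.filter fun p : Fin n × Fin n => p.1 < p.2).val.map
          fun p => dist (P p.1) (P p.2))
        = ((Finset.univ.filter fun p : Fin n × Fin n => p.1 < p.2).val.map
          fun p => dist (Q p.1) (Q p.2)) := by
  set F := Finset.univ.filter fun p : Fin n × Fin n => p.1 < p.2 with hF
  have hsumP : ∀ z : ℝ, ((F.val.map fun p => dist (P p.1) (P p.2)).map
      (fun m => m ^ z)).sum = ∑ p ∈ F, dist (P p.1) (P p.2) ^ z := by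
    intro z
    rw [Multiset.map_map]
    rfl
  have hsumQ : ∀ z : ℝ, ((F.val.map fun p => dist (Q p.1) (Q p.2)).map
      (fun m => m ^ z)).sum = ∑ p ∈ F, dist (Q p.1) (Q p.2) ^ z := by
    intro z
    rw [Multiset.map_map]
    rfl
  have hoffP : ∀ z : ℝ, (∑ p ∈ Finset.univ.offDiag, dist (P p.1) (P p.2) ^ z)
      = 2 * ∑ p ∈ F, dist (P p.1) (P p.2) ^ z :=
    fun z => offDiag_sum_eq n _ (fun p => by simp [dist_comm])
  have hoffQ : ∀ z : ℝ, (∑ p ∈ Finset.univ.offDiag, dist (Q p.1) (Q p.2) ^ z)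
      = 2 * ∑ p ∈ F, dist (Q p.1) (Q p.2) ^ z :=
    fun z => offDiag_sum_eq n _ (fun p => by simp [dist_comm])
  constructor
  · intro h
    refine key_aux (Multiset.card (F.val.map fun p => dist (P p.1) (P p.2))) _ _ rfl ?_ ?_ ?_
    · intro x hx
      obtain ⟨p, hp, rfl⟩ := Multiset.mem_map.1 hx
      have hp' : p.1 < p.2 := (Finset.mem_filter.1 hp).2
      exact dist_pos.2 (fun he => absurd (hP he) (ne_of_lt hp'))
    · intro x hx
      obtain ⟨p, hp, rfl⟩ := Multiset.mem_map.1 hx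
      have hp' : p.1 < p.2 := (Finset.mem_filter.1 hp).2
      exact dist_pos.2 (fun he => absurd (hQ he) (ne_of_lt hp'))
    · intro z
      rw [hsumP z, hsumQ z]
      have := h z
      rw [hoffP z, hoffQ z] at this
      linarith
  · intro h z
    rw [hoffP z, hoffQ z, ← hsumP z, ← hsumQ z, h]
end

section
/- For n a multiple of 3 with n ≥ 6 and θ = π/n, define F_n(i,j,k) = sin⁴θ + sin⁴(iθ) + sin⁴(jθ) + sin⁴(kθ) − sin²(iθ)sin²(jθ) − sin²(iθ)sin²(kθ) − sin²(jθ)sin²(kθ) − sin²θ(sin²(iθ) + sin²(jθ) + sin²(kθ)). Then F_n(n/3 − 1, n/3, n/3 + 1) = 0. -/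
open Real

/-- The polynomial condition `F_n(i,j,k)` for a planar point at distances
`δ_i, δ_j, δ_k` from the vertices of a unit equilateral triangle, with `θ = π/n`. -/
noncomputable def Fn (n : ℕ) (i j k : ℕ) : ℝ :=
  Real.sin (π / n) ^ 4 + Real.sin (i * (π / n)) ^ 4 + Real.sin (j * (π / n)) ^ 4
    + Real.sin (k * (π / n)) ^ 4
    - Real.sin (i * (π / n)) ^ 2 * Real.sin (j * (π / n)) ^ 2
    - Real.sin (i * (π / n)) ^ 2 * Real.sin (k * (π / n)) ^ 2
    - Real.sin (j * (π / n)) ^ 2 * Real.sin (k * (π / n)) ^ 2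
    - Real.sin (π / n) ^ 2 * (Real.sin (i * (π / n)) ^ 2 + Real.sin (j * (π / n)) ^ 2
        + Real.sin (k * (π / n)) ^ 2)

/-- For `n` a multiple of 3 with `n ≥ 6`, `F_n(n/3 − 1, n/3, n/3 + 1) = 0`. -/
theorem Fn_third_solution (n : ℕ) (h3 : 3 ∣ n) (hn : 6 ≤ n) :
    Fn n (n / 3 - 1) (n / 3) (n / 3 + 1) = 0 := by
  obtain ⟨m, rfl⟩ := h3
  have hm : 2 ≤ m := by omega
  have hdiv : 3 * m / 3 = m := by omega
  rw [hdiv]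
  unfold Fn
  have hm0 : (m : ℝ) ≠ 0 := by positivity
  set θ : ℝ := π / (3 * m : ℕ) with hθ
  have hmθ : (m : ℝ) * θ = π / 3 := by
    rw [hθ]; push_cast; field_simp
  have h1 : ((m - 1 : ℕ) : ℝ) * θ = π / 3 - θ := by
    have : ((m - 1 : ℕ) : ℝ) = (m : ℝ) - 1 := by
      have : (1:ℕ) ≤ m := by omega
      push_cast [Nat.cast_sub this]; ring
    rw [this, sub_mul, one_mul, hmθ]
  have h2 : ((m + 1 : ℕ) : ℝ) * θ = π / 3 + θ := by
    push_cast; rw [add_mul, one_mul, hmθ]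
  rw [h1, hmθ, h2, Real.sin_sub, Real.sin_add, Real.sin_pi_div_three,
    Real.cos_pi_div_three]
  have hsc : Real.sin θ ^ 2 + Real.cos θ ^ 2 = 1 := Real.sin_sq_add_cos_sq θ
  have ht : (Real.sqrt 3) ^ 2 = 3 := Real.sq_sqrt (by norm_num)
  set s := Real.sin θ
  set c := Real.cos θ
  set t := Real.sqrt 3
  linear_combination (9/16 * (s^2 + c^2 - 1)) * hsc +
    (1/16 * c^4 * t^2 + 3/8 * s^2 * c^2 + 1/16 * t^2 - 1/8 * c^2 * t^2
      - 3/8 * s^2 + 3/16 * c^4 + 3/16 - 3/8 * c^2) * ht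
end

section
/- For n an even multiple of 6 with n ≥ 12 and θ = π/n, F_n(n/6 − 1, n/6, n/6) = 0 and F_n(n/6, n/6, n/6 + 1) = 0, where F_n is defined by F_n(i,j,k) = sin⁴θ + sin⁴(iθ) + sin⁴(jθ) + sin⁴(kθ) − sin²(iθ)sin²(jθ) − sin²(iθ)sin²(kθ) − sin²(jθ)sin²(kθ) − sin²θ(sin²(iθ) + sin²(jθ) + sin²(kθ)). -/
open Real

/-- For `n` an even multiple of 3 (i.e. a multiple of 6) with `n ≥ 12`,
`F_n(n/6 − 1, n/6, n/6) = 0` and `F_n(n/6, n/6, n/6 + 1) = 0`. -/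
theorem Fn_sixth_solutions (n : ℕ) (h6 : 6 ∣ n) (hn : 12 ≤ n) :
    Fn n (n / 6 - 1) (n / 6) (n / 6) = 0 ∧ Fn n (n / 6) (n / 6) (n / 6 + 1) = 0 := by
  obtain ⟨m, rfl⟩ := h6
  have hm2 : 2 ≤ m := by omega
  have hd : 6 * m / 6 = m := by omega
  rw [hd]
  have hmR : (0:ℝ) < (m:ℝ) := by exact_mod_cast Nat.pos_of_ne_zero (by omega)
  set θ : ℝ := π / ((6 * m : ℕ) : ℝ) with hθdef
  have hmθ : (m:ℝ) * θ = π / 6 := by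
    rw [hθdef]; push_cast; field_simp
  have hsub : ((m - 1 : ℕ) : ℝ) = (m : ℝ) - 1 := by
    have := Nat.cast_sub (R := ℝ) (by omega : 1 ≤ m); simpa using this
  have h1 : ((m - 1 : ℕ) : ℝ) * θ = π / 6 - θ := by
    rw [hsub, sub_mul, one_mul, hmθ]
  have h2 : ((m + 1 : ℕ) : ℝ) * θ = π / 6 + θ := by
    push_cast; rw [add_mul, one_mul, hmθ]
  have hpy : Real.sin θ ^ 2 + Real.cos θ ^ 2 = 1 := Real.sin_sq_add_cos_sq θ
  have hr : (Real.sqrt 3) ^ 2 = 3 := Real.sq_sqrt (by norm_num)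
  set s := Real.sin θ
  set c := Real.cos θ
  set r := Real.sqrt 3
  constructor
  · unfold Fn
    rw [show (π / ((6 * m : ℕ) : ℝ)) = θ from rfl, h1, hmθ, Real.sin_sub,
      Real.sin_pi_div_six, Real.cos_pi_div_six]
    linear_combination (-1/16 + 1/16*c^2 + -1/4*s*c*r + 13/16*s^2) * hpy +
      (-1/8*s^2 + 3/8*s^2*c^2 + -1/4*s^3*c*r + -1/16*s^4 + 1/16*s^4*r^2) * hr
  · unfold Fn
    rw [show (π / ((6 * m : ℕ) : ℝ)) = θ from rfl, h2, hmθ, Real.sin_add,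
      Real.sin_pi_div_six, Real.cos_pi_div_six]
    linear_combination (-1/16 + 1/16*c^2 + 1/4*s*c*r + 13/16*s^2) * hpy +
      (-1/8*s^2 + 3/8*s^2*c^2 + 1/4*s^3*c*r + -1/16*s^4 + 1/16*s^4*r^2) * hr
end

section
/- Let A, B, C ∈ ℝ² be the vertices of a unit equilateral triangle, let n be a multiple of 3 with n ≥ 6, θ = π/n, and δ_m = sin(mθ)/sin θ. If P ∈ ℝ² satisfies |PA| = δ_i, |PB| = δ_j, |PC| = δ_k for some 1 ≤ i,j,k ≤ ⌊n/2⌋, then F_n(i,j,k) = 0, where F_n(i,j,k) = sin⁴θ + sin⁴(iθ) + sin⁴(jθ) + sin⁴(kθ) − sin²(iθ)sin²(jθ) − sin²(iθ)sin²(kθ) − sin²(jθ)sin²(kθ) − sin²θ(sin²(iθ) + sin²(jθ) + sin²(kθ)). -/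
open Real

/-- Coordinate form of the key identity: if three points `u, v, w` in the plane are
pairwise at distance 1, then for any point (taken as the origin) the squared distances
`x, y, z` to them satisfy `x²+y²+z²+1 = xy+xz+yz+x+y+z`. -/
lemma key_identity (u1 u2 v1 v2 w1 w2 : ℝ)
    (h1 : (u1 - v1) ^ 2 + (u2 - v2) ^ 2 = 1)
    (h2 : (v1 - w1) ^ 2 + (v2 - w2) ^ 2 = 1)
    (h3 : (u1 - w1) ^ 2 + (u2 - w2) ^ 2 = 1) :
    (u1 ^ 2 + u2 ^ 2) ^ 2 + (v1 ^ 2 + v2 ^ 2) ^ 2 + (w1 ^ 2 + w2 ^ 2) ^ 2 + 1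
      - (u1 ^ 2 + u2 ^ 2) * (v1 ^ 2 + v2 ^ 2)
      - (u1 ^ 2 + u2 ^ 2) * (w1 ^ 2 + w2 ^ 2)
      - (v1 ^ 2 + v2 ^ 2) * (w1 ^ 2 + w2 ^ 2)
      - (u1 ^ 2 + u2 ^ 2) - (v1 ^ 2 + v2 ^ 2) - (w1 ^ 2 + w2 ^ 2) = 0 := by
  set x := u1 ^ 2 + u2 ^ 2 with hx
  set y := v1 ^ 2 + v2 ^ 2 with hy
  set z := w1 ^ 2 + w2 ^ 2 with hz
  set g12 := u1 * v1 + u2 * v2 with hg12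
  set g13 := u1 * w1 + u2 * w2 with hg13
  set g23 := v1 * w1 + v2 * w2 with hg23
  linear_combination
    (2 * z * (g12 + (x + y - 1) / 2) - 4 * g13 * g23) * h1 +
    (2 * x * (g23 + (y + z - 1) / 2) - 4 * ((x + y - 1) / 2) * ((x + z - 1) / 2)) * h2 +
    (2 * y * (g13 + (x + z - 1) / 2) - 4 * ((x + y - 1) / 2) * g23) * h3

lemma dist_sq_eq (X Y : EuclideanSpace ℝ (Fin 2)) :
    dist X Y ^ 2 = (X 0 - Y 0) ^ 2 + (X 1 - Y 1) ^ 2 := by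
  rw [EuclideanSpace.dist_eq, Real.sq_sqrt (by positivity)]
  simp [Fin.sum_univ_two, Real.dist_eq, sq_abs]

/-- If `A, B, C` are the vertices of a unit equilateral triangle in the plane, `n` is a
multiple of 3 with `n ≥ 6`, and a point `P` of the plane satisfies `|PA| = δ_i`,
`|PB| = δ_j`, `|PC| = δ_k` with `δ_m = sin(mπ/n)/sin(π/n)` and `1 ≤ i,j,k ≤ ⌊n/2⌋`,
then `F_n(i,j,k) = 0`. -/
theorem Fn_vanishes_of_planar_point (n : ℕ) (h3 : 3 ∣ n) (hn : 6 ≤ n)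
    (A B C P : EuclideanSpace ℝ (Fin 2))
    (hAB : dist A B = 1) (hBC : dist B C = 1) (hCA : dist C A = 1)
    (i j k : ℕ) (hi : 1 ≤ i) (hi' : i ≤ n / 2) (hj : 1 ≤ j) (hj' : j ≤ n / 2)
    (hk : 1 ≤ k) (hk' : k ≤ n / 2)
    (hPA : dist P A = Real.sin (i * (π / n)) / Real.sin (π / n))
    (hPB : dist P B = Real.sin (j * (π / n)) / Real.sin (π / n))
    (hPC : dist P C = Real.sin (k * (π / n)) / Real.sin (π / n)) :
    Fn n i j k = 0 := by
  have hs : 0 < Real.sin (π / n) := by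
    apply Real.sin_pos_of_pos_of_lt_pi
    · positivity
    · have hn' : (1 : ℝ) < n := by exact_mod_cast lt_of_lt_of_le (by norm_num) hn
      calc π / n < π / 1 := by
            apply div_lt_div_of_pos_left Real.pi_pos (by norm_num) hn'
        _ = π := by ring
  -- squared side lengths
  have h1 : (A 0 - B 0) ^ 2 + (A 1 - B 1) ^ 2 = 1 := by
    rw [← dist_sq_eq, hAB]; norm_num
  have h2 : (B 0 - C 0) ^ 2 + (B 1 - C 1) ^ 2 = 1 := by
    rw [← dist_sq_eq, hBC]; norm_num
  have h3' : (A 0 - C 0) ^ 2 + (A 1 - C 1) ^ 2 = 1 := by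
    have : dist C A = dist A C := dist_comm C A
    rw [← dist_sq_eq, ← this, hCA]; norm_num
  -- apply the key identity to the vectors A-P, B-P, C-P
  have key := key_identity (A 0 - P 0) (A 1 - P 1) (B 0 - P 0) (B 1 - P 1)
      (C 0 - P 0) (C 1 - P 1)
      (by linear_combination h1) (by linear_combination h2) (by linear_combination h3')
  -- express the squared distances
  have ha : (A 0 - P 0) ^ 2 + (A 1 - P 1) ^ 2 = dist P A ^ 2 := by
    rw [dist_sq_eq]; ring
  have hb : (B 0 - P 0) ^ 2 + (B 1 - P 1) ^ 2 = dist P B ^ 2 := by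
    rw [dist_sq_eq]; ring
  have hc : (C 0 - P 0) ^ 2 + (C 1 - P 1) ^ 2 = dist P C ^ 2 := by
    rw [dist_sq_eq]; ring
  rw [ha, hb, hc, hPA, hPB, hPC] at key
  have hsi : Real.sin (i * (π / n)) = (Real.sin (i * (π / n)) / Real.sin (π / n)) *
      Real.sin (π / n) := by field_simp
  have hsj : Real.sin (j * (π / n)) = (Real.sin (j * (π / n)) / Real.sin (π / n)) *
      Real.sin (π / n) := by field_simp
  have hsk : Real.sin (k * (π / n)) = (Real.sin (k * (π / n)) / Real.sin (π / n)) *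
      Real.sin (π / n) := by field_simp
  unfold Fn
  rw [hsi, hsj, hsk]
  linear_combination (Real.sin (π / n)) ^ 4 * key
end

section
/- For n a multiple of 3 with n ≥ 6 and δ_m = sin(mπ/n)/sin(π/n), the identity 1 + δ_{n/3−1} = δ_{n/3+1} holds. -/
open Real

/-- For `n` a multiple of 3 with `n ≥ 6` and `δ_m = sin(mπ/n)/sin(π/n)`, the identity
`1 + δ_{n/3−1} = δ_{n/3+1}` holds. -/
theorem one_add_delta_identity (n : ℕ) (h3 : 3 ∣ n) (hn : 6 ≤ n) :
    1 + Real.sin ((n / 3 - 1 : ℕ) * π / n) / Real.sin (π / n)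
      = Real.sin ((n / 3 + 1 : ℕ) * π / n) / Real.sin (π / n) := by
  obtain ⟨k, rfl⟩ := h3
  have hk : 2 ≤ k := by omega
  have hk0 : (0:ℝ) < k := by positivity
  have hn0 : (0:ℝ) < 3 * k := by positivity
  have hsin : Real.sin (π / (3 * k)) ≠ 0 := by
    apply ne_of_gt
    apply Real.sin_pos_of_pos_of_lt_pi
    · positivity
    · rw [div_lt_iff₀ hn0]
      have : (1:ℝ) < 3 * k := by
        have : (2:ℝ) ≤ k := by exact_mod_cast hk
        linarith
      nlinarith [Real.pi_pos]
  have h1 : 3 * k / 3 = k := by omega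
  have h2 : ((k - 1 : ℕ) : ℝ) = (k : ℝ) - 1 := by
    push_cast [Nat.cast_sub (by omega : 1 ≤ k)]; ring
  rw [h1, h2]
  push_cast
  have e1 : ((k:ℝ) - 1) * π / (3 * k) = π / 3 - π / (3 * k) := by
    field_simp
  have e2 : ((k:ℝ) + 1) * π / (3 * k) = π / 3 + π / (3 * k) := by
    field_simp
  rw [e1, e2, Real.sin_add, Real.sin_sub, Real.cos_pi_div_three]
  field_simp
  ring
end

section
/- There is no point P in the Euclidean plane whose distances to the three vertices of a unit equilateral triangle form any of the multisets [1, 1, δ_2], [1, δ_2, δ_2], or [δ_2, δ_2, δ_2], where δ_2 = 2cos(π/5) = (1+√5)/2. -/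
open Real

private lemma sqdist (x y : EuclideanSpace ℝ (Fin 2)) :
    dist x y ^ 2 = (x 0 - y 0) ^ 2 + (x 1 - y 1) ^ 2 := by
  rw [EuclideanSpace.dist_eq, Real.sq_sqrt (by positivity), Fin.sum_univ_two]
  simp [Real.dist_eq, sq_abs]

private lemma core (s x y z : ℝ) (hs : s ^ 2 = 5) (hs0 : 0 ≤ s)
    (hx : x = 1 ∨ x = (3 + s) / 2) (hy : y = 1 ∨ y = (3 + s) / 2)
    (hz : z = 1 ∨ z = (3 + s) / 2)
    (hF : x ^ 2 + y ^ 2 + z ^ 2 - x * y - y * z - z * x - x - y - z + 1 = 0) : False := by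
  rcases hx with hx | hx <;> rcases hy with hy | hy <;> rcases hz with hz | hz <;>
    subst hx hy hz <;> nlinarith [hs, hs0, sq_nonneg s, sq_nonneg (s - 2)]

/-- There is no point `P` of the Euclidean plane whose multiset of distances to the
three vertices of a unit equilateral triangle is `[1,1,δ₂]`, `[1,δ₂,δ₂]` or
`[δ₂,δ₂,δ₂]`, where `δ₂ = (1+√5)/2` is the diagonal of the unit regular pentagon. -/
theorem no_point_pentagon_distances (P A B C : EuclideanSpace ℝ (Fin 2))
    (hAB : dist A B = 1) (hBC : dist B C = 1) (hCA : dist C A = 1) :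
    ({dist P A, dist P B, dist P C} : Multiset ℝ) ≠ {1, 1, (1 + Real.sqrt 5) / 2} ∧
    ({dist P A, dist P B, dist P C} : Multiset ℝ)
        ≠ {1, (1 + Real.sqrt 5) / 2, (1 + Real.sqrt 5) / 2} ∧
    ({dist P A, dist P B, dist P C} : Multiset ℝ)
        ≠ {(1 + Real.sqrt 5) / 2, (1 + Real.sqrt 5) / 2, (1 + Real.sqrt 5) / 2} := by
  have hs : Real.sqrt 5 ^ 2 = 5 := Real.sq_sqrt (by norm_num)
  have hs0 : (0 : ℝ) ≤ Real.sqrt 5 := Real.sqrt_nonneg 5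
  -- Cayley–Menger identity for four points in the plane
  have gen : -2 * (dist A B ^ 2) * (dist B C ^ 2) * (dist C A ^ 2)
      + 2 * (dist P C ^ 2) * (dist A B ^ 2) * (dist C A ^ 2)
      + 2 * (dist P C ^ 2) * (dist A B ^ 2) * (dist B C ^ 2)
      - 2 * (dist P C ^ 2) * (dist A B ^ 2) ^ 2
      - 2 * (dist P C ^ 2) ^ 2 * (dist A B ^ 2)
      - 2 * (dist P B ^ 2) * (dist C A ^ 2) ^ 2
      + 2 * (dist P B ^ 2) * (dist B C ^ 2) * (dist C A ^ 2)
      + 2 * (dist P B ^ 2) * (dist A B ^ 2) * (dist C A ^ 2)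
      + 2 * (dist P B ^ 2) * (dist P C ^ 2) * (dist C A ^ 2)
      - 2 * (dist P B ^ 2) * (dist P C ^ 2) * (dist B C ^ 2)
      + 2 * (dist P B ^ 2) * (dist P C ^ 2) * (dist A B ^ 2)
      - 2 * (dist P B ^ 2) ^ 2 * (dist C A ^ 2)
      + 2 * (dist P A ^ 2) * (dist B C ^ 2) * (dist C A ^ 2)
      - 2 * (dist P A ^ 2) * (dist B C ^ 2) ^ 2
      + 2 * (dist P A ^ 2) * (dist A B ^ 2) * (dist B C ^ 2)
      - 2 * (dist P A ^ 2) * (dist P C ^ 2) * (dist C A ^ 2)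
      + 2 * (dist P A ^ 2) * (dist P C ^ 2) * (dist B C ^ 2)
      + 2 * (dist P A ^ 2) * (dist P C ^ 2) * (dist A B ^ 2)
      + 2 * (dist P A ^ 2) * (dist P B ^ 2) * (dist C A ^ 2)
      + 2 * (dist P A ^ 2) * (dist P B ^ 2) * (dist B C ^ 2)
      - 2 * (dist P A ^ 2) * (dist P B ^ 2) * (dist A B ^ 2)
      - 2 * (dist P A ^ 2) ^ 2 * (dist B C ^ 2) = 0 := by
    rw [sqdist P A, sqdist P B, sqdist P C, sqdist A B, sqdist B C, sqdist C A]; ring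
  rw [hAB, hBC, hCA] at gen
  have hF : dist P A ^ 2 * (dist P A ^ 2) + dist P B ^ 2 * (dist P B ^ 2)
      + dist P C ^ 2 * (dist P C ^ 2)
      - dist P A ^ 2 * (dist P B ^ 2) - dist P B ^ 2 * (dist P C ^ 2)
      - dist P C ^ 2 * (dist P A ^ 2)
      - dist P A ^ 2 - dist P B ^ 2 - dist P C ^ 2 + 1 = 0 := by
    linear_combination (-1 / 2 : ℝ) * gen
  have sqcase : ∀ d : ℝ, 0 ≤ d → d = 1 ∨ d = (1 + Real.sqrt 5) / 2 →
      d ^ 2 = 1 ∨ d ^ 2 = (3 + Real.sqrt 5) / 2 := by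
    rintro d _ (rfl | rfl)
    · left; norm_num
    · right; rw [div_pow]; rw [show (1 + Real.sqrt 5) ^ 2 = 1 + 2 * Real.sqrt 5 + Real.sqrt 5 ^ 2 by ring, hs]; ring
  have finish : ∀ m : Multiset ℝ, (∀ d ∈ m, d = 1 ∨ d = (1 + Real.sqrt 5) / 2) →
      ({dist P A, dist P B, dist P C} : Multiset ℝ) ≠ m := by
    intro m hm heq
    have hA : dist P A = 1 ∨ dist P A = (1 + Real.sqrt 5) / 2 := hm _ (heq ▸ by simp)
    have hB : dist P B = 1 ∨ dist P B = (1 + Real.sqrt 5) / 2 := hm _ (heq ▸ by simp)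
    have hC : dist P C = 1 ∨ dist P C = (1 + Real.sqrt 5) / 2 := hm _ (heq ▸ by simp)
    exact core (Real.sqrt 5) (dist P A ^ 2) (dist P B ^ 2) (dist P C ^ 2) hs hs0
      (sqcase _ dist_nonneg hA) (sqcase _ dist_nonneg hB) (sqcase _ dist_nonneg hC)
      (by linear_combination hF)
  refine ⟨finish _ ?_, finish _ ?_, finish _ ?_⟩ <;>
    · intro d hd
      simp at hd
      tauto
end
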